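/- Let E be the infinite EES with events e_{ij} for 0 ≤ j ≤ i (i ranging over ℕ), all labelled a, with e_{ij} ≤ e_{ik} iff j ≤ k; and let F be the infinite EES with events e'_{ij} for i, j ∈ ℕ, all labelled a, with e'_{ij} ≤ e'_{ik} iff j ≤ k. Then E and F are pomset bisimilar but neither weak history preserving bisimilar nor history preserving bisimilar. -/

import Mathlib

/-- A labelled prime event structure over alphabet `A`. -/
structure PES (A : Type*) where
  E : Type*
  le : E → E → Prop
  conflict : E → E → Prop
  lab : E → A
  le_refl : ∀ e, le e e
  le_trans : ∀ e e' e'', le e e' → le e' e'' → le e e''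
  le_antisymm : ∀ e e', le e e' → le e' e → e = e'
  finite_past : ∀ e, Set.Finite {e' | le e' e ∧ e' ≠ e}
  conflict_irrefl : ∀ e, ¬ conflict e e
  conflict_symm : ∀ e e', conflict e e' → conflict e' e
  conflict_inherit : ∀ e e' e'', le e e' → e ≠ e' → conflict e e'' → conflict e' e''

namespace PES

variable {A : Type*}

/-- A coherence space: a PES with empty (strict) causality. -/
def IsCS (P : PES A) : Prop := ∀ e e', P.le e e' → e = e'

/-- An elementary event structure: a PES with empty conflict. -/
def IsEES (P : PES A) : Prop := ∀ e e', ¬ P.conflict e e'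

/-- Concurrency. -/
def co (P : PES A) (e e' : P.E) : Prop :=
  ¬ P.le e e' ∧ ¬ P.le e' e ∧ ¬ P.conflict e e'

/-- Configurations: finite, conflict-free, downward-closed sets of events. -/
def Config (P : PES A) (X : Set P.E) : Prop :=
  X.Finite ∧ (∀ e ∈ X, ∀ e' ∈ X, ¬ P.conflict e e') ∧
    (∀ e ∈ X, ∀ e', P.le e' e → e' ∈ X)

/-- Single-event labelled transition between configurations. -/
def Trans (P : PES A) (X : Set P.E) (a : A) (X' : Set P.E) : Prop :=
  P.Config X ∧ P.Config X' ∧ ∃ e, e ∉ X ∧ X' = insert e X ∧ P.lab e = a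

/-- `X` can perform the sequential trace `w`. -/
def TraceFrom (P : PES A) : Set P.E → List A → Prop
  | X, [] => P.Config X
  | X, a :: w => ∃ X', P.Trans X a X' ∧ P.TraceFrom X' w

/-- Sequential traces of a PES. -/
def STr (P : PES A) (w : List A) : Prop := P.TraceFrom ∅ w

/-- Interleaving trace equivalence. -/
def ITrEq (P Q : PES A) : Prop := ∀ w : List A, P.STr w ↔ Q.STr w

/-- Interleaving bisimulation. -/
def IBisim (P Q : PES A) (R : Set P.E → Set Q.E → Prop) : Prop :=
  R ∅ ∅ ∧ ∀ X Y, R X Y →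
    (∀ a X', P.Trans X a X' → ∃ Y', Q.Trans Y a Y' ∧ R X' Y') ∧
    (∀ a Y', Q.Trans Y a Y' → ∃ X', P.Trans X a X' ∧ R X' Y')

/-- Interleaving bisimilarity. -/
def IBisimilar (P Q : PES A) : Prop := ∃ R, IBisim P Q R

/-- Step transition, labelled by the multiset of labels of a nonempty set of
pairwise concurrent events added at once. -/
def StepTrans (P : PES A) (X : Set P.E) (m : Multiset A) (X' : Set P.E) : Prop :=
  P.Config X ∧ P.Config X' ∧ X ⊆ X' ∧ ∃ G : Finset P.E, ↑G = X' \ X ∧ G.Nonempty ∧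
    (∀ e ∈ G, ∀ e' ∈ G, e ≠ e' → P.co e e') ∧ Multiset.map P.lab G.val = m

/-- `X` can perform the step trace `s`. -/
def StepTraceFrom (P : PES A) : Set P.E → List (Multiset A) → Prop
  | X, [] => P.Config X
  | X, m :: s => ∃ X', P.StepTrans X m X' ∧ P.StepTraceFrom X' s

/-- Step traces of a PES. -/
def StTr (P : PES A) (s : List (Multiset A)) : Prop := P.StepTraceFrom ∅ s

/-- Step trace equivalence. -/
def STrEq (P Q : PES A) : Prop := ∀ s : List (Multiset A), P.StTr s ↔ Q.StTr s

/-- Step bisimulation. -/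
def SBisim (P Q : PES A) (R : Set P.E → Set Q.E → Prop) : Prop :=
  R ∅ ∅ ∧ ∀ X Y, R X Y →
    (∀ m X', P.StepTrans X m X' → ∃ Y', Q.StepTrans Y m Y' ∧ R X' Y') ∧
    (∀ m Y', Q.StepTrans Y m Y' → ∃ X', P.StepTrans X m X' ∧ R X' Y')

/-- Step bisimilarity. -/
def SBisimilar (P Q : PES A) : Prop := ∃ R, SBisim P Q R

/-- `f` restricts to a label-preserving order-isomorphism from `X` onto `Y`. -/
def IsoOn (P Q : PES A) (f : P.E → Q.E) (X : Set P.E) (Y : Set Q.E) : Prop :=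
  Set.BijOn f X Y ∧ (∀ e ∈ X, ∀ e' ∈ X, (P.le e e' ↔ Q.le (f e) (f e'))) ∧
    ∀ e ∈ X, Q.lab (f e) = P.lab e

/-- The labelled posets induced by `X` and `Y` are isomorphic (same pomset). -/
def PIso (P Q : PES A) (X : Set P.E) (Y : Set Q.E) : Prop :=
  ∃ f, IsoOn P Q f X Y

/-- Pomset trace equivalence: same sets of pomsets of configurations. -/
def PTrEq (P Q : PES A) : Prop :=
  (∀ X, P.Config X → ∃ Y, Q.Config Y ∧ PIso P Q X Y) ∧
  (∀ Y, Q.Config Y → ∃ X, P.Config X ∧ PIso P Q X Y)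

/-- Pomset transition: strictly extending a configuration. -/
def PomTrans (P : PES A) (X X' : Set P.E) : Prop :=
  P.Config X ∧ P.Config X' ∧ X ⊂ X'

/-- Pomset bisimulation: matched extensions must add isomorphic pomsets. -/
def PBisim (P Q : PES A) (R : Set P.E → Set Q.E → Prop) : Prop :=
  R ∅ ∅ ∧ ∀ X Y, R X Y →
    (∀ X', P.PomTrans X X' →
      ∃ Y', Q.PomTrans Y Y' ∧ PIso P Q (X' \ X) (Y' \ Y) ∧ R X' Y') ∧
    (∀ Y', Q.PomTrans Y Y' →
      ∃ X', P.PomTrans X X' ∧ PIso P Q (X' \ X) (Y' \ Y) ∧ R X' Y')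

/-- Pomset bisimilarity. -/
def PBisimilar (P Q : PES A) : Prop := ∃ R, PBisim P Q R

/-- Weak history preserving bisimulation. -/
def WHBisim (P Q : PES A) (R : Set P.E → Set Q.E → Prop) : Prop :=
  R ∅ ∅ ∧ ∀ X Y, R X Y → PIso P Q X Y ∧
    (∀ a X', P.Trans X a X' → ∃ Y', Q.Trans Y a Y' ∧ R X' Y') ∧
    (∀ a Y', Q.Trans Y a Y' → ∃ X', P.Trans X a X' ∧ R X' Y')

/-- Weak history preserving bisimilarity. -/
def WHBisimilar (P Q : PES A) : Prop := ∃ R, WHBisim P Q R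

/-- History preserving bisimulation: triples `(X, Y, f)`. -/
def HBisim (P Q : PES A) (R : Set P.E → Set Q.E → (P.E → Q.E) → Prop) : Prop :=
  (∃ f, R ∅ ∅ f) ∧ ∀ X Y f, R X Y f → IsoOn P Q f X Y ∧
    (∀ a X', P.Trans X a X' →
      ∃ Y' f', Q.Trans Y a Y' ∧ R X' Y' f' ∧ ∀ e ∈ X, f' e = f e) ∧
    (∀ a Y', Q.Trans Y a Y' →
      ∃ X' f', P.Trans X a X' ∧ R X' Y' f' ∧ ∀ e ∈ X, f' e = f e)

/-- History preserving bisimilarity. -/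
def HBisimilar (P Q : PES A) : Prop := ∃ R, HBisim P Q R

/-- Closure under backward transitions, as needed for hereditary hp-bisimulations. -/
def Hereditary (P Q : PES A) (R : Set P.E → Set Q.E → (P.E → Q.E) → Prop) : Prop :=
  ∀ X Y f, R X Y f →
    (∀ a X', P.Trans X' a X → R X' (f '' X') f) ∧
    (∀ a Y', Q.Trans Y' a Y → R {e ∈ X | f e ∈ Y'} Y' f)

/-- Hereditary history preserving bisimilarity. -/
def HHBisimilar (P Q : PES A) : Prop := ∃ R, HBisim P Q R ∧ Hereditary P Q R

/-- Isomorphism of PESs. -/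
def Iso (P Q : PES A) : Prop :=
  ∃ f : P.E ≃ Q.E, (∀ e e', P.le e e' ↔ Q.le (f e) (f e')) ∧
    (∀ e e', P.conflict e e' ↔ Q.conflict (f e) (f e')) ∧
    ∀ e, Q.lab (f e) = P.lab e

end PES


/-- Disjoint chains of lengths 1, 2, 3, ...: events `e_{ij}` for `j ≤ i`,
with `e_{ij} ≤ e_{ik}` iff `j ≤ k`; all labelled alike. -/
def eesTri : PES Unit where
  E := {p : ℕ × ℕ // p.2 ≤ p.1}
  le p q := p.val.1 = q.val.1 ∧ p.val.2 ≤ q.val.2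
  conflict _ _ := False
  lab _ := ()
  le_refl _ := ⟨rfl, le_refl _⟩
  le_trans _ _ _ h h' := ⟨h.1.trans h'.1, h.2.trans h'.2⟩
  le_antisymm _ _ h h' := Subtype.ext (Prod.ext h.1 (le_antisymm h.2 h'.2))
  finite_past e := by
    have h : Set.Finite ({e.val.1} ×ˢ Set.Iic e.val.2 : Set (ℕ × ℕ)) :=
      (Set.finite_singleton _).prod (Set.finite_Iic _)
    refine Set.Finite.subset (h.preimage Subtype.val_injective.injOn) ?_
    rintro p ⟨⟨h1, h2⟩, -⟩
    exact ⟨h1, h2⟩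
  conflict_irrefl _ h := h
  conflict_symm _ _ h := h
  conflict_inherit _ _ _ _ _ h := h

/-- Countably many disjoint infinite chains: events `e'_{ij}` for all `i, j`,
with `e'_{ij} ≤ e'_{ik}` iff `j ≤ k`; all labelled alike. -/
def eesGrid : PES Unit where
  E := ℕ × ℕ
  le p q := p.1 = q.1 ∧ p.2 ≤ q.2
  conflict _ _ := False
  lab _ := ()
  le_refl _ := ⟨rfl, le_refl _⟩
  le_trans _ _ _ h h' := ⟨h.1.trans h'.1, h.2.trans h'.2⟩
  le_antisymm _ _ h h' := Prod.ext h.1 (le_antisymm h.2 h'.2)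
  finite_past e := by
    refine Set.Finite.subset
      (((Set.finite_singleton e.1).prod (Set.finite_Iic e.2))) ?_
    rintro p ⟨⟨h1, h2⟩, -⟩
    exact ⟨h1, h2⟩
  conflict_irrefl _ h := h
  conflict_symm _ _ h := h
  conflict_inherit _ _ _ _ _ h := h

/-
Any two configurations of `eesTri` and `eesGrid` are related by a pomset bisimulation. A pomset
transition `X ⊂ X'` adds, on each chain `i`, the segment above the height of `X` on that chain; so
`X' \ X` is a finite disjoint union of finite chains, and it can be copied onto chains that the
other side has not touched yet, each lowered to start at its bottom event. Only the copy into
`eesTri` needs care: chain `B + i` there has `B + i + 1` events, enough once `B` exceeds every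
segment length.

The isolated event `e₀₀` of `eesTri` breaks weak history preservation: `eesGrid` answers it with
the bottom `q` of some chain, then performs the successor of `q`, and `eesTri` can only add an
event incomparable with `e₀₀`, so the two configurations are not isomorphic. History preserving
bisimilarity implies the weak version.
-/

namespace PES

variable {A : Type*} {P Q : PES A}

lemma config_empty (P : PES A) : P.Config ∅ :=
  ⟨Set.finite_empty, by simp, by simp⟩

lemma config_of_isEES (hP : P.IsEES) {X : Set P.E} (hfin : X.Finite)
    (hdown : ∀ e ∈ X, ∀ e', P.le e' e → e' ∈ X) : P.Config X :=
  ⟨hfin, fun e _ e' _ => hP e e', hdown⟩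

lemma isoOn_image {f : P.E → Q.E} {D : Set P.E}
    (hle : ∀ e ∈ D, ∀ e' ∈ D, P.le e e' ↔ Q.le (f e) (f e'))
    (hlab : ∀ e ∈ D, Q.lab (f e) = P.lab e) : IsoOn P Q f D (f '' D) := by
  refine ⟨⟨Set.mapsTo_image f D, fun e he e' he' hf => ?_, Set.surjOn_image f D⟩, hle, hlab⟩
  exact P.le_antisymm e e' ((hle e he e' he').2 (hf ▸ Q.le_refl _))
    ((hle e' he' e he).2 (hf ▸ Q.le_refl _))

lemma PIso.symm [Nonempty Q.E] {X : Set P.E} {Y : Set Q.E} (h : PIso Q P Y X) :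
    PIso P Q X Y := by
  obtain ⟨g, hbij, hle, hlab⟩ := h
  have hinv := hbij.invOn_invFunOn
  have hmaps := (hbij.symm hinv.symm).mapsTo
  refine ⟨Function.invFunOn g Y, hbij.symm hinv.symm, fun e he e' he' => ?_, fun e he => ?_⟩
  · rw [hle _ (hmaps he) _ (hmaps he'), hinv.2 he, hinv.2 he']
  · rw [← hlab _ (hmaps he), hinv.2 he]

lemma IsoOn.exists_le_preimage {f : P.E → Q.E} {X : Set P.E} {Y : Set Q.E}
    (hf : IsoOn P Q f X Y) {y y' : Q.E} (hy : y ∈ Y) (hy' : y' ∈ Y) (hle : Q.le y y') :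
    ∃ x ∈ X, ∃ x' ∈ X, f x = y ∧ f x' = y' ∧ P.le x x' := by
  obtain ⟨x, hx, rfl⟩ := hf.1.2.2 hy
  obtain ⟨x', hx', rfl⟩ := hf.1.2.2 hy'
  exact ⟨x, hx, x', hx', rfl, rfl, (hf.2.1 x hx x' hx').2 hle⟩

theorem HBisimilar.wHBisimilar (h : HBisimilar P Q) : WHBisimilar P Q := by
  obtain ⟨R, ⟨f₀, hR₀⟩, hR⟩ := h
  refine ⟨fun X Y => ∃ f, R X Y f, ⟨f₀, hR₀⟩, fun X Y ⟨f, hXY⟩ => ?_⟩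
  obtain ⟨hiso, hfwd, hbwd⟩ := hR X Y f hXY
  refine ⟨⟨f, hiso⟩, fun a X' hX' => ?_, fun a Y' hY' => ?_⟩
  · obtain ⟨Y', f', hY', hR', -⟩ := hfwd a X' hX'
    exact ⟨Y', hY', f', hR'⟩
  · obtain ⟨X', f', hX', hR', -⟩ := hbwd a Y' hY'
    exact ⟨X', hX', f', hR'⟩

theorem not_wHBisimilar_of_isolated (e₀ : P.E) (he₀ : ∀ e, P.le e e₀ ∨ P.le e₀ e → e = e₀)
    (hsucc : ∀ q, Q.Config {q} → ∃ q', q ≠ q' ∧ Q.le q q' ∧ Q.Config {q', q}) :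
    ¬ WHBisimilar P Q := by
  rintro ⟨R, hR₀, hR⟩
  have hconf₀ : P.Config {e₀} :=
    ⟨Set.finite_singleton e₀, by simpa using P.conflict_irrefl e₀,
      fun e he e' hle => by rw [he] at hle; exact he₀ e' (Or.inl hle)⟩
  have htrans₀ : P.Trans ∅ (P.lab e₀) {e₀} :=
    ⟨config_empty P, hconf₀, e₀, Set.notMem_empty e₀, Set.singleton_def e₀, rfl⟩
  obtain ⟨Y₁, ⟨-, hY₁, q, -, rfl, -⟩, hR₁⟩ := (hR ∅ ∅ hR₀).2.1 _ _ htrans₀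
  rw [← Set.singleton_def] at hY₁ hR₁
  obtain ⟨q', hqq', hle, hY₂⟩ := hsucc q hY₁
  obtain ⟨X₂, ⟨-, -, e, he, rfl, -⟩, hR₂⟩ :=
    (hR _ _ hR₁).2.2 _ _ ⟨hY₁, hY₂, q', fun h => hqq' h.symm, rfl, rfl⟩
  obtain ⟨f, hf⟩ := (hR _ _ hR₂).1
  obtain ⟨x, hx, x', hx', rfl, rfl, hxx'⟩ :=
    hf.exists_le_preimage (by simp) (by simp) hle
  have hne : x ≠ x' := fun h => hqq' (congrArg f h)
  simp only [Set.mem_insert_iff, Set.mem_singleton_iff] at hx hx' he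
  rcases hx with rfl | rfl <;> rcases hx' with rfl | rfl
  · exact hne rfl
  · exact he (he₀ x (Or.inl hxx'))
  · exact he (he₀ x' (Or.inr hxx'))
  · exact hne rfl

def PomAnswers (P Q : PES A) : Prop :=
  ∀ ⦃X X' : Set P.E⦄ ⦃Y : Set Q.E⦄, P.PomTrans X X' → Q.Config Y →
    ∃ Y', Q.PomTrans Y Y' ∧ PIso P Q (X' \ X) (Y' \ Y)

theorem pBisimilar_of_pomAnswers (hPQ : PomAnswers P Q) (hQP : PomAnswers Q P) :
    PBisimilar P Q := by
  refine ⟨fun X Y => P.Config X ∧ Q.Config Y, ⟨config_empty P, config_empty Q⟩,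
    fun X Y ⟨hX, hY⟩ => ⟨fun X' hX' => ?_, fun Y' hY' => ?_⟩⟩
  · obtain ⟨Y', hY', hiso⟩ := hPQ hX' hY
    exact ⟨Y', hY', hiso, hX'.2.1, hY'.2.1⟩
  · obtain ⟨X', hX', hiso⟩ := hQP hY' hX
    have : Nonempty Q.E := (Set.nonempty_of_ssubset' hY'.2.2).to_subtype.map Subtype.val
    exact ⟨X', hX', hiso.symm, hX'.2.1, hY'.2.1⟩

lemma exists_pomTrans_of_fresh_image (hQ : Q.IsEES) {Y : Set Q.E} (hY : Q.Config Y)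
    {D : Set P.E} (hD : D.Finite) (hne : D.Nonempty) {f : P.E → Q.E}
    (hle : ∀ e ∈ D, ∀ e' ∈ D, P.le e e' ↔ Q.le (f e) (f e'))
    (hlab : ∀ e ∈ D, Q.lab (f e) = P.lab e) (hfresh : ∀ e ∈ D, f e ∉ Y)
    (hdown : ∀ e ∈ D, ∀ q, Q.le q (f e) → q ∈ f '' D) :
    ∃ Y', Q.PomTrans Y Y' ∧ PIso P Q D (Y' \ Y) := by
  have hdiff : (Y ∪ f '' D) \ Y = f '' D := by
    rw [Set.union_sdiff_left, sdiff_eq_left, Set.disjoint_left]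
    rintro _ ⟨e, he, rfl⟩
    exact hfresh e he
  obtain ⟨e, he⟩ := hne
  refine ⟨Y ∪ f '' D, ⟨hY, ?_, ?_⟩, f, ?_⟩
  · refine config_of_isEES hQ (hY.1.union (hD.image f)) ?_
    rintro _ (hq | ⟨e, he, rfl⟩) q hle
    · exact Or.inl (hY.2.2 _ hq q hle)
    · exact Or.inr (hdown e he q hle)
  · exact Set.ssubset_iff_of_subset Set.subset_union_left |>.2
      ⟨f e, Or.inr ⟨e, he, rfl⟩, hfresh e he⟩
  · rw [hdiff]
    exact isoOn_image hle hlab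

end PES

namespace eesGrid

def shift (N : ℕ) (h : ℕ → ℕ) (p : ℕ × ℕ) : ℕ × ℕ := (N + p.1, p.2 - h p.1)

lemma isEES : eesGrid.IsEES := fun _ _ h => h

lemma exists_height {Y : Set (ℕ × ℕ)} (hY : eesGrid.Config Y) :
    ∃ h : ℕ → ℕ, ∀ p, p ∈ Y ↔ p.2 < h p.1 := by
  have hfin : Y.Finite := hY.1
  obtain ⟨b, hb⟩ := hfin.bddAbove
  refine ⟨fun i => sInf {j | (i, j) ∉ Y}, fun p => ⟨fun hp => ?_, fun hp => ?_⟩⟩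
  · by_contra! hle
    have hne : {j | (p.1, j) ∉ Y}.Nonempty :=
      ⟨b.2 + 1, fun hmem => by have := (Prod.le_def.1 (hb hmem)).2; omega⟩
    exact Nat.sInf_mem hne (hY.2.2 p hp _ ⟨rfl, hle⟩)
  · simpa using Nat.notMem_of_lt_sInf hp

lemma shift_le_shift_iff {N : ℕ} {h : ℕ → ℕ} {p q : ℕ × ℕ} (hp : h p.1 ≤ p.2)
    (hq : h q.1 ≤ q.2) : eesGrid.le (shift N h p) (shift N h q) ↔ eesGrid.le p q := by
  change N + p.1 = N + q.1 ∧ p.2 - h p.1 ≤ q.2 - h q.1 ↔ p.1 = q.1 ∧ p.2 ≤ q.2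
  constructor
  · rintro ⟨h₁, h₂⟩
    have h₁ : p.1 = q.1 := by omega
    rw [h₁] at hp h₂
    exact ⟨h₁, by omega⟩
  · rintro ⟨h₁, h₂⟩
    rw [h₁] at hp ⊢
    exact ⟨rfl, by omega⟩

lemma exists_shift_eq_of_le {N : ℕ} {h : ℕ → ℕ} {Y Y' : Set (ℕ × ℕ)}
    (hY : ∀ p, p ∈ Y ↔ p.2 < h p.1) (hY' : eesGrid.Config Y') {p r : ℕ × ℕ}
    (hp : p ∈ Y' \ Y) (hr : eesGrid.le r (shift N h p)) : ∃ q ∈ Y' \ Y, shift N h q = r := by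
  obtain ⟨hr₁, hr₂⟩ := hr
  have hhp : h p.1 ≤ p.2 := not_lt.1 ((hY p).not.1 hp.2)
  refine ⟨(p.1, r.2 + h p.1), ⟨hY'.2.2 p hp.1 _ ⟨rfl, ?_⟩, ?_⟩, ?_⟩
  · change r.2 ≤ p.2 - h p.1 at hr₂
    omega
  · simp [hY]
  · exact Prod.ext hr₁.symm (Nat.add_sub_cancel r.2 (h p.1))

lemma exists_succ (q : ℕ × ℕ) (hq : eesGrid.Config {q}) :
    ∃ q', q ≠ q' ∧ eesGrid.le q q' ∧ eesGrid.Config {q', q} := by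
  refine ⟨(q.1, q.2 + 1), fun h => by simpa using congrArg Prod.snd h, ⟨rfl, by simp⟩,
    PES.config_of_isEES eesGrid.isEES ((Set.finite_singleton q).insert _) ?_⟩
  rintro e he p ⟨hp₁, hp₂⟩
  rcases he with rfl | rfl
  · rcases Nat.lt_or_eq_of_le hp₂ with hlt | heq
    · exact Or.inr (hq.2.2 q rfl p ⟨hp₁, Nat.le_of_lt_succ hlt⟩)
    · exact Or.inl (Prod.ext hp₁ heq)
  · exact Or.inr (hq.2.2 _ rfl p ⟨hp₁, hp₂⟩)

end eesGrid

namespace eesTri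

def e00 : eesTri.E := ⟨(0, 0), le_rfl⟩

lemma isEES : eesTri.IsEES := fun _ _ h => h

lemma eq_e00_of_comparable (e : eesTri.E) (he : eesTri.le e e00 ∨ eesTri.le e00 e) :
    e = e00 := by
  obtain ⟨⟨i, j⟩, hji⟩ := e
  have hi : i = 0 := by rcases he with he | he; exacts [he.1, he.1.symm]
  subst hi
  exact Subtype.ext (Prod.ext rfl (Nat.le_zero.1 hji))

/-- `eesTri` is the restriction of `eesGrid` to the downward closed set `{p | p.2 ≤ p.1}`. -/
lemma config_image_val {X : Set eesTri.E} (hX : eesTri.Config X) :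
    eesGrid.Config (Subtype.val '' X) := by
  refine PES.config_of_isEES eesGrid.isEES (hX.1.image _) ?_
  rintro _ ⟨e, he, rfl⟩ p ⟨hp₁, hp₂⟩
  have hp : p.2 ≤ p.1 := by have := e.2; omega
  exact ⟨⟨p, hp⟩, hX.2.2 e he _ ⟨hp₁, hp₂⟩, rfl⟩

/-- Clamps a point of `ℕ × ℕ` into the triangle; only applied to points already there. -/
def ofGrid (p : ℕ × ℕ) : eesTri.E := ⟨(p.1, min p.2 p.1), min_le_right _ _⟩

lemma val_ofGrid {p : ℕ × ℕ} (hp : p.2 ≤ p.1) : (ofGrid p).val = p :=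
  Prod.ext rfl (min_eq_left hp)

end eesTri

theorem eesTri_pomAnswers : PES.PomAnswers eesTri eesGrid := by
  rintro X X' Y ⟨hX, hX', hXX'⟩ hY
  obtain ⟨h, hh⟩ := eesGrid.exists_height (eesTri.config_image_val hX)
  have hfin : Set.Finite (α := ℕ × ℕ) Y := hY.1
  obtain ⟨b, hb⟩ := hfin.bddAbove
  have hfresh : ∀ p ∈ Y, p.1 < b.1 + 1 := fun p hp => Nat.lt_succ_of_le (hb hp).1
  have hval : ∀ e ∈ X' \ X, e.val ∈ Subtype.val '' X' \ Subtype.val '' X := fun e he =>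
    ⟨⟨e, he.1, rfl⟩, fun ⟨e', he', heq⟩ => he.2 (Subtype.ext heq ▸ he')⟩
  have hbase : ∀ e ∈ X' \ X, h e.val.1 ≤ e.val.2 := fun e he =>
    not_lt.1 ((hh e.val).not.1 (hval e he).2)
  refine PES.exists_pomTrans_of_fresh_image eesGrid.isEES hY (hX'.1.subset Set.sdiff_subset)
    (Set.nonempty_of_ssubset hXX') (f := eesGrid.shift (b.1 + 1) h ∘ Subtype.val)
    (fun e he e' he' => (eesGrid.shift_le_shift_iff (hbase e he) (hbase e' he')).symm)
    (fun _ _ => rfl) (fun e _ he => by have : b.1 + 1 + e.val.1 < b.1 + 1 := hfresh _ he; omega)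
    (fun e he r hr => ?_)
  obtain ⟨q, hq, rfl⟩ := eesGrid.exists_shift_eq_of_le hh (eesTri.config_image_val hX')
    (hval e he) hr
  obtain ⟨⟨e', he', rfl⟩, hq⟩ := hq
  exact ⟨e', ⟨he', fun h => hq ⟨e', h, rfl⟩⟩, rfl⟩

theorem eesGrid_pomAnswers : PES.PomAnswers eesGrid eesTri := by
  rintro Y Y' X ⟨hY, hY', hYY'⟩ hX
  obtain ⟨h, hh⟩ := eesGrid.exists_height hY
  have hfin : Set.Finite (α := ℕ × ℕ) Y' := hY'.1
  obtain ⟨b, hb⟩ := ((hX.1.image Subtype.val).union hfin).bddAbove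
  set B := b.1 + b.2 + 1
  set g := eesTri.ofGrid ∘ eesGrid.shift B h
  have hg : ∀ p ∈ Y' \ Y, (g p).val = eesGrid.shift B h p := fun p hp =>
    eesTri.val_ofGrid (by have := (hb (Or.inr hp.1)).2; simp only [eesGrid.shift]; omega)
  have hbase : ∀ p ∈ Y' \ Y, h p.1 ≤ p.2 := fun p hp => not_lt.1 ((hh p).not.1 hp.2)
  have hfresh : ∀ e ∈ X, e.val.1 < B := fun e he => by
    have := (hb (Or.inl ⟨e, he, rfl⟩)).1; omega
  refine PES.exists_pomTrans_of_fresh_image eesTri.isEES hX (hY'.1.subset Set.sdiff_subset)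
    (Set.nonempty_of_ssubset hYY') (f := g) (fun p hp q hq => ?_) (fun _ _ => rfl)
    (fun p _ hp => by have : B + p.1 < B := hfresh _ hp; omega)
    (fun p hp e he => ?_)
  · change _ ↔ eesGrid.le (g p).val (g q).val
    rw [hg p hp, hg q hq, eesGrid.shift_le_shift_iff (hbase p hp) (hbase q hq)]
  · change eesGrid.le e.val (g p).val at he
    rw [hg p hp] at he
    obtain ⟨q, hq, hqe⟩ := eesGrid.exists_shift_eq_of_le hh hY' hp he
    exact ⟨q, hq, Subtype.ext ((hg q hq).trans hqe)⟩

theorem infinite_ees_pb_not_whb_hb :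
    PES.PBisimilar eesTri eesGrid ∧
    ¬ PES.WHBisimilar eesTri eesGrid ∧ ¬ PES.HBisimilar eesTri eesGrid := by
  have hwhb : ¬ PES.WHBisimilar eesTri eesGrid :=
    PES.not_wHBisimilar_of_isolated eesTri.e00 eesTri.eq_e00_of_comparable eesGrid.exists_succ
  exact ⟨PES.pBisimilar_of_pomAnswers eesTri_pomAnswers eesGrid_pomAnswers, hwhb,
    fun h => hwhb h.wHBisimilar⟩
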